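/- Let (X, ρ_X) and (F, ρ_F) be metric spaces, L a positive integer, Y = {1, …, L}, and Z = X × Y. Let f : X → F, let γ, δ ≥ 0, let A > 0, and let g₁, g₋₁ : ℝ → ℝ be A-Lipschitz functions. For z = (x, y) and z′ = (x′, y′) in Z, define the pairwise loss h(z, z′) = g₁(ρ_F(f(x), f(x′))) if y = y′ and h(z, z′) = g₋₁(ρ_F(f(x), f(x′))) if y ≠ y′. Suppose X₁, …, X_K is a partition of X such that each X_k has diameter at most γ (any two of its points are within distance γ) and f is a δ-isometry on each X_k (for all u, v ∈ X_k, |ρ_F(f(u), f(v)) − ρ_X(u, v)| ≤ δ). Consider the induced partition of Z into the L·K sets X_k × {y} for k = 1, …, K and y ∈ Y. Then for any z_i, z₁′ belonging to one common cell of this partition and any z_j, z₂′ belonging to one common cell of this partition, one has |h(z_i, z_j) − h(z₁′, z₂′)| ≤ 2A(γ + δ). In particular, the learning algorithm is (L·K, 2A(γ + δ))-robust in the sense of the (K, ε)-robustness definition. -/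
import Mathlib


/-- Given a partition of `X` into `K` cells each of diameter at most `γ`
on which `f` is a `δ`-isometry, and the pairwise loss `h` built from `A`-Lipschitz
losses `g₁` (same label) and `g₋₁` (different labels) applied to the distance between
transformed features, any two pairs of samples lying (pairwise) in the same cells of the
induced partition of `Z = X × Fin L` into the `L·K` sets `X_k × {y}` incur losses
differing by at most `2A(γ + δ)`; i.e. the algorithm is `(L·K, 2A(γ+δ))`-robust. -/
theorem stmt_3 {X F : Type*} [MetricSpace X] [MetricSpace F]
    (L : ℕ) (hL : 0 < L) (f : X → F) (γ δ A : ℝ)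
    (hγ : 0 ≤ γ) (hδ : 0 ≤ δ) (hA : 0 < A)
    (g₁ gneg : ℝ → ℝ)
    (hg₁ : ∀ a b : ℝ, |g₁ a - g₁ b| ≤ A * |a - b|)
    (hgneg : ∀ a b : ℝ, |gneg a - gneg b| ≤ A * |a - b|)
    (h : X × Fin L → X × Fin L → ℝ)
    (hdef : ∀ z z' : X × Fin L,
      h z z' = if z.2 = z'.2 then g₁ (dist (f z.1) (f z'.1))
               else gneg (dist (f z.1) (f z'.1)))
    (K : ℕ) (P : Fin K → Set X)
    (hdisj : Pairwise fun i j => Disjoint (P i) (P j))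
    (hcover : (⋃ k, P k) = Set.univ)
    (hdiam : ∀ k : Fin K, ∀ u ∈ P k, ∀ v ∈ P k, dist u v ≤ γ)
    (hiso : ∀ k : Fin K, ∀ u ∈ P k, ∀ v ∈ P k, |dist (f u) (f v) - dist u v| ≤ δ)
    (p q : Fin K) (yp yq : Fin L)
    (zi z₁' zj z₂' : X × Fin L)
    (hzi : zi ∈ P p ×ˢ ({yp} : Set (Fin L)))
    (hz₁' : z₁' ∈ P p ×ˢ ({yp} : Set (Fin L)))
    (hzj : zj ∈ P q ×ˢ ({yq} : Set (Fin L)))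
    (hz₂' : z₂' ∈ P q ×ˢ ({yq} : Set (Fin L))) :
    |h zi zj - h z₁' z₂'| ≤ 2 * A * (γ + δ) := by
  obtain ⟨hzi1, hzi2⟩ := hzi
  obtain ⟨hz₁'1, hz₁'2⟩ := hz₁'
  obtain ⟨hzj1, hzj2⟩ := hzj
  obtain ⟨hz₂'1, hz₂'2⟩ := hz₂'
  simp only [Set.mem_singleton_iff] at hzi2 hz₁'2 hzj2 hz₂'2
  have key : |dist (f zi.1) (f zj.1) - dist (f z₁'.1) (f z₂'.1)| ≤ 2 * (γ + δ) := by
    have h1 : dist (f zi.1) (f z₁'.1) ≤ γ + δ := by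
      have := hiso p zi.1 hzi1 z₁'.1 hz₁'1
      have := hdiam p zi.1 hzi1 z₁'.1 hz₁'1
      have := abs_le.1 (hiso p zi.1 hzi1 z₁'.1 hz₁'1)
      linarith [this.2]
    have h2 : dist (f zj.1) (f z₂'.1) ≤ γ + δ := by
      have := hdiam q zj.1 hzj1 z₂'.1 hz₂'1
      have h' := abs_le.1 (hiso q zj.1 hzj1 z₂'.1 hz₂'1)
      linarith [h'.2]
    have := dist_dist_dist_le (f zi.1) (f zj.1) (f z₁'.1) (f z₂'.1)
    rw [Real.dist_eq] at this
    linarith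
  rw [hdef zi zj, hdef z₁' z₂', hzi2, hzj2, hz₁'2, hz₂'2]
  by_cases hy : yp = yq
  · simp only [hy, if_pos rfl]
    calc |g₁ (dist (f zi.1) (f zj.1)) - g₁ (dist (f z₁'.1) (f z₂'.1))|
        ≤ A * |dist (f zi.1) (f zj.1) - dist (f z₁'.1) (f z₂'.1)| := hg₁ _ _
      _ ≤ A * (2 * (γ + δ)) := by
          exact mul_le_mul_of_nonneg_left key hA.le
      _ = 2 * A * (γ + δ) := by ring
  · simp only [if_neg hy]
    calc |gneg (dist (f zi.1) (f zj.1)) - gneg (dist (f z₁'.1) (f z₂'.1))|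
        ≤ A * |dist (f zi.1) (f zj.1) - dist (f z₁'.1) (f z₂'.1)| := hgneg _ _
      _ ≤ A * (2 * (γ + δ)) := mul_le_mul_of_nonneg_left key hA.le
      _ = 2 * A * (γ + δ) := by ring
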